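/- For any nonzero vector b ∈ ℂ^N, the signal lengths satisfy l(b) + l(F b) ≥ N + 1, where F is the centered discrete Fourier transform and l(a) = max{i - j : i, j ∈ supp(a)} + 1 counts via support indices in I_N. -/

import Mathlib

open scoped Real BigOperators

/-- The index set `I_N = {-M+1, ..., -M+N}` with `M = ⌊(N+1)/2⌋`. -/
noncomputable def Iset (N : ℕ) : Finset ℤ :=
  Finset.Icc (1 - (((N + 1) / 2 : ℕ) : ℤ)) ((N : ℤ) - (((N + 1) / 2 : ℕ) : ℤ))

/-- The centered discrete Fourier transform. -/
noncomputable def dft (N : ℕ) (u : ℤ → ℂ) (l : ℤ) : ℂ :=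
  (Real.sqrt N : ℂ)⁻¹ *
    ∑ k ∈ Iset N, Complex.exp (-2 * Real.pi * Complex.I * k * l / N) * u k

open Classical in
/-- The support of a vector: indices in `I_N` where it is nonzero. -/
noncomputable def supp (N : ℕ) (u : ℤ → ℂ) : Finset ℤ :=
  (Iset N).filter (fun k => u k ≠ 0)

/-- The signal length `L(b) = max{i - j : i, j ∈ supp b} + 1`. -/
noncomputable def len (N : ℕ) (u : ℤ → ℂ) : ℕ :=
  ((supp N u ×ˢ supp N u).sup fun p => (p.1 - p.2).toNat) + 1

/-!
Let `supp b ⊆ [m, M]` and `ω = exp(-2πi/N)`. Then `(F b)(l) = N^{-1/2} ω^{lm} P(ω^l)` for a nonzero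
polynomial `P` of degree at most `M - m`. As `l ↦ ω^l` is injective on the `N` consecutive integers
of `I_N`, `F b` has at most `M - m = L(b) - 1` zeros there, so
`L(F b) ≥ #supp (F b) ≥ N - L(b) + 1`.
-/

open Finset Polynomial

section ShiftPoly

variable {K : Type*} [Field K] {S : Finset ℤ} {c : ℤ → K} {m : ℤ}

noncomputable def shiftPoly (S : Finset ℤ) (c : ℤ → K) (m : ℤ) : K[X] :=
  ∑ k ∈ S, C (c k) * X ^ (k - m).toNat

lemma eval_shiftPoly (hS : ∀ k ∈ S, m ≤ k) {x : K} (hx : x ≠ 0) :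
    x ^ m * (shiftPoly S c m).eval x = ∑ k ∈ S, c k * x ^ k := by
  rw [shiftPoly, eval_finsetSum, mul_sum]
  refine sum_congr rfl fun k hk => ?_
  have hexp : x ^ k = x ^ m * x ^ (k - m).toNat := by
    rw [← zpow_natCast, ← zpow_add₀ hx, Int.toNat_of_nonneg (sub_nonneg.2 (hS k hk)),
      add_sub_cancel]
  rw [hexp]
  simp only [eval_mul, eval_C, eval_pow, eval_X]
  ring

lemma natDegree_shiftPoly_le {M : ℤ} (hS : ∀ k ∈ S, k ≤ M) :
    (shiftPoly S c m).natDegree ≤ (M - m).toNat :=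
  natDegree_sum_le_of_forall_le _ _ fun k hk =>
    (natDegree_C_mul_X_pow_le _ _).trans (by have := hS k hk; omega)

lemma coeff_shiftPoly (hS : ∀ k ∈ S, m ≤ k) {k : ℤ} (hk : k ∈ S) :
    (shiftPoly S c m).coeff (k - m).toNat = c k := by
  rw [shiftPoly, finsetSum_coeff, sum_eq_single k]
  · simp
  · intro j hj hjk
    have := hS j hj
    have := hS k hk
    rw [coeff_C_mul_X_pow, if_neg (by omega)]
  · exact fun h => absurd hk h

lemma shiftPoly_ne_zero (hS : ∀ k ∈ S, m ≤ k) (hc : ∃ k ∈ S, c k ≠ 0) :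
    shiftPoly S c m ≠ 0 := by
  obtain ⟨k, hk, hck⟩ := hc
  intro h
  exact hck (by rw [← coeff_shiftPoly (c := c) hS hk, h, coeff_zero])

lemma card_filter_sum_zpow_eq_zero_le [DecidableEq K] {M : ℤ} (hS : ∀ k ∈ S, m ≤ k ∧ k ≤ M)
    (hc : ∃ k ∈ S, c k ≠ 0) (T : Finset K) :
    #{x ∈ T | x ≠ 0 ∧ ∑ k ∈ S, c k * x ^ k = 0} ≤ (M - m).toNat := by
  have hm : ∀ k ∈ S, m ≤ k := fun k hk => (hS k hk).1
  have hP := shiftPoly_ne_zero hm hc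
  refine (card_le_degree_of_subset_roots (p := shiftPoly S c m) fun x hx => ?_).trans
    (natDegree_shiftPoly_le fun k hk => (hS k hk).2)
  obtain ⟨-, hx0, hsum⟩ := mem_filter.1 hx
  rw [mem_roots hP, IsRoot, ← mul_right_inj' (zpow_ne_zero m hx0), eval_shiftPoly hm hx0, hsum,
    mul_zero]

end ShiftPoly

lemma IsPrimitiveRoot.injOn_zpow_Ico {G₀ : Type*} [CommGroupWithZero G₀] {ζ : G₀} {n : ℕ}
    (hζ : IsPrimitiveRoot ζ n) (a : ℤ) : Set.InjOn (ζ ^ · : ℤ → G₀) (Set.Ico a (a + n)) := by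
  rintro i ⟨hai, hin⟩ j ⟨haj, hjn⟩ hij
  have hζ0 : ζ ≠ 0 := hζ.ne_zero (by omega)
  have hdvd : (n : ℤ) ∣ i - j := by
    rw [← hζ.zpow_eq_one_iff_dvd, zpow_sub₀ hζ0, div_eq_one_iff_eq (zpow_ne_zero _ hζ0)]
    exact hij
  have := Int.eq_zero_of_abs_lt_dvd hdvd (by rw [abs_lt]; omega)
  omega

lemma card_Iset (N : ℕ) : #(Iset N) = N := by
  rw [Iset, Int.card_Icc]
  omega

lemma len_eq_of_nonempty {N : ℕ} {u : ℤ → ℂ} (hu : (supp N u).Nonempty) :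
    len N u = ((supp N u).max' hu - (supp N u).min' hu).toNat + 1 := by
  rw [len, add_left_inj]
  refine le_antisymm (Finset.sup_le fun p hp => ?_) ?_
  · rw [mem_product] at hp
    have := (supp N u).le_max' p.1 hp.1
    have := (supp N u).min'_le p.2 hp.2
    omega
  · exact le_sup (f := fun p : ℤ × ℤ => (p.1 - p.2).toNat) (b := (_, _))
      (mem_product.2 ⟨max'_mem _ hu, min'_mem _ hu⟩)

lemma card_supp_le_len (N : ℕ) (u : ℤ → ℂ) : #(supp N u) ≤ len N u := by
  rcases (supp N u).eq_empty_or_nonempty with hu | hu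
  · simp [hu]
  have hsub : supp N u ⊆ Icc ((supp N u).min' hu) ((supp N u).max' hu) := fun k hk =>
    mem_Icc.2 ⟨min'_le _ k hk, le_max' _ k hk⟩
  have := card_le_card hsub
  rw [Int.card_Icc] at this
  rw [len_eq_of_nonempty hu]
  omega

noncomputable def dftRoot (N : ℕ) : ℂ := Complex.exp (-2 * π * Complex.I / N)

lemma isPrimitiveRoot_dftRoot {N : ℕ} (hN : N ≠ 0) : IsPrimitiveRoot (dftRoot N) N := by
  have h : dftRoot N = (Complex.exp (2 * π * Complex.I / N))⁻¹ := by
    rw [dftRoot, ← Complex.exp_neg]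
    ring_nf
  exact h ▸ (Complex.isPrimitiveRoot_exp N hN).inv

lemma dft_eq_sum_supp (N : ℕ) (u : ℤ → ℂ) (l : ℤ) :
    dft N u l = (Real.sqrt N : ℂ)⁻¹ * ∑ k ∈ supp N u, u k * (dftRoot N ^ l) ^ k := by
  rw [dft, supp, sum_filter_of_ne fun k _ h => left_ne_zero_of_mul h]
  congr 1
  refine sum_congr rfl fun k _ => ?_
  rw [dftRoot, ← zpow_mul, ← Complex.exp_int_mul, mul_comm (u k)]
  congr 2
  push_cast
  ring

lemma card_filter_dft_eq_zero_lt_len {N : ℕ} {u : ℤ → ℂ} (hu : (supp N u).Nonempty) :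
    #{l ∈ Iset N | dft N u l = 0} < len N u := by
  have hN : N ≠ 0 := by
    rw [← card_Iset N]
    exact (hu.mono (filter_subset _ _)).card_pos.ne'
  have hω := isPrimitiveRoot_dftRoot hN
  have hwindow : ∀ k ∈ supp N u, (supp N u).min' hu ≤ k ∧ k ≤ (supp N u).max' hu :=
    fun k hk => ⟨min'_le _ k hk, le_max' _ k hk⟩
  have hc : ∃ k ∈ supp N u, u k ≠ 0 := ⟨_, min'_mem _ hu, (mem_filter.1 (min'_mem _ hu)).2⟩
  rw [len_eq_of_nonempty hu, Nat.lt_succ_iff]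
  refine (card_le_card_of_injOn (dftRoot N ^ ·)
    (t := {x ∈ (Iset N).image (dftRoot N ^ ·) | x ≠ 0 ∧ ∑ k ∈ supp N u, u k * x ^ k = 0})
    (fun l hl => ?_) ?_).trans (card_filter_sum_zpow_eq_zero_le hwindow hc _)
  · obtain ⟨hl, hdft⟩ := mem_filter.1 hl
    rw [dft_eq_sum_supp, mul_eq_zero] at hdft
    refine mem_filter.2 ⟨mem_image_of_mem _ hl, zpow_ne_zero _ (hω.ne_zero hN),
      hdft.resolve_left ?_⟩
    simp [hN]
  · exact (hω.injOn_zpow_Ico (1 - ((N + 1) / 2 : ℕ))).mono fun l hl => by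
      simp only [coe_filter, Iset, mem_Icc, Set.mem_ofPred_eq, Set.mem_Ico] at hl ⊢
      omega

theorem stmt4_general (N : ℕ) (b : ℤ → ℂ) (hb : ∃ k ∈ Iset N, b k ≠ 0) :
    N + 1 ≤ len N b + len N (dft N b) := by
  obtain ⟨k, hk, hbk⟩ := hb
  have hzeros := card_filter_dft_eq_zero_lt_len (u := b) ⟨k, mem_filter.2 ⟨hk, hbk⟩⟩
  have hsplit := card_filter_add_card_filter_not (s := Iset N) (dft N b · = 0)
  have hsupp : supp N (dft N b) = {l ∈ Iset N | ¬dft N b l = 0} := by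
    simp [supp]
  rw [card_Iset, ← hsupp] at hsplit
  have := card_supp_le_len N (dft N b)
  omega

theorem stmt4 (N : ℕ) (hN : 1 ≤ N) (b : ℤ → ℂ) (hb : ∃ k ∈ Iset N, b k ≠ 0) :
    N + 1 ≤ len N b + len N (dft N b) :=
  stmt4_general N b hb
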